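/- Let S_r, S_d, T_r, T_d be elements of the even subalgebra of Cl₄ satisfying S_r·reverse(S_d) + S_d·reverse(S_r) = 0 and T_r·reverse(T_d) + T_d·reverse(T_r) = 0. Then the components of the product pair, U_r = S_rT_r + S_dT_d and U_d = S_rT_d + S_dT_r, satisfy the same relation: U_r·reverse(U_d) + U_d·reverse(U_r) = 0. That is, the set of pairs of octonion-like numbers satisfying the orthogonality condition is closed under the split-bioctonion multiplication. -/

import Mathlib

/-!
Expanding the product, the `Tr Td† + Td Tr†` terms are killed by the hypothesis on `T`, and
what remains is `Sr A Sd† + Sd A Sr†` with `A = Tr Tr† + Td Td†`. Now `A` is even and fixed by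
reversion; in `Cl₄` such an element lies in the span of `1` and the pseudoscalar `e₀e₁e₂e₃`
(reversion negates grade two), and both commute with every even element. Moving `A` to the
right leaves `(Sr Sd† + Sd Sr†) A = 0`.
-/

open CliffordAlgebra

/-- The positive-definite quadratic form `Q₄(v) = v₀² + v₁² + v₂² + v₃²` on `ℝ⁴`. -/
noncomputable def Q4 : QuadraticForm ℝ (Fin 4 → ℝ) :=
  QuadraticMap.weightedSumSquares ℝ (fun _ : Fin 4 => (1 : ℝ))

/-- The generators `e i` of the Clifford algebra `Cl₄ = Cl_{4,0}`. -/
noncomputable def e (i : Fin 4) : CliffordAlgebra Q4 :=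
  CliffordAlgebra.ι Q4 (Pi.single i 1)

section
variable {R M : Type*} [CommRing R] [AddCommGroup M] [Module R M] {Q : QuadraticForm R M}

theorem orthogonality_closed_under_mul_of_commute (Sr Sd Tr Td : CliffordAlgebra Q)
    (hS : Sr * reverse Sd + Sd * reverse Sr = 0)
    (hT : Tr * reverse Td + Td * reverse Tr = 0)
    (hr : Commute (Tr * reverse Tr + Td * reverse Td) (reverse Sr))
    (hd : Commute (Tr * reverse Tr + Td * reverse Td) (reverse Sd)) :
    (Sr * Tr + Sd * Td) * reverse (Sr * Td + Sd * Tr) +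
      (Sr * Td + Sd * Tr) * reverse (Sr * Tr + Sd * Td) = 0 := by
  set A := Tr * reverse Tr + Td * reverse Td
  have expand : (Sr * Tr + Sd * Td) * reverse (Sr * Td + Sd * Tr) +
      (Sr * Td + Sd * Tr) * reverse (Sr * Tr + Sd * Td) =
        Sr * (Tr * reverse Td + Td * reverse Tr) * reverse Sr +
          Sd * (Tr * reverse Td + Td * reverse Tr) * reverse Sd +
            (Sr * (A * reverse Sd) + Sd * (A * reverse Sr)) := by
    simp only [A, map_add, reverse.map_mul]
    noncomm_ring
  rw [expand, hT, hd.eq, hr.eq, ← mul_assoc, ← mul_assoc, ← add_mul, hS]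
  simp

theorem mul_reverse_mem_evenOdd_zero {x : CliffordAlgebra Q} {n : ZMod 2}
    (hx : x ∈ evenOdd Q n) : x * reverse x ∈ evenOdd Q 0 := by
  simpa [CharTwo.add_self_eq_zero] using
    SetLike.mul_mem_graded hx ((reverse_mem_evenOdd_iff Q).mpr hx)

end

theorem Q4_single_self (i : Fin 4) : Q4 (Pi.single i 1) = 1 := by
  simp [Q4, QuadraticMap.weightedSumSquares_apply, Pi.single_apply]

theorem Q4_isOrtho_single {i j : Fin 4} (h : i ≠ j) :
    Q4.IsOrtho (Pi.single i 1) (Pi.single j 1) := by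
  simp [QuadraticMap.IsOrtho, Q4, QuadraticMap.weightedSumSquares_apply, Pi.single_apply,
    mul_add, Finset.sum_add_distrib, h, h.symm]

@[simp] theorem e_mul_self (i : Fin 4) : e i * e i = 1 := by
  rw [e, ι_sq_scalar, Q4_single_self, map_one]

@[simp] theorem e_mul_e_mul_self (i : Fin 4) (x : CliffordAlgebra Q4) : e i * (e i * x) = x := by
  rw [← mul_assoc, e_mul_self, one_mul]

theorem e_mul_e_of_lt {i j : Fin 4} (h : i < j) : e j * e i = -(e i * e j) :=
  ι_mul_ι_comm_of_isOrtho (Q4_isOrtho_single h.ne')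

theorem e_mul_e_mul_of_lt {i j : Fin 4} (h : i < j) (x : CliffordAlgebra Q4) :
    e j * (e i * x) = -(e i * (e j * x)) :=
  ι_mul_ι_mul_of_isOrtho x (Q4_isOrtho_single h.ne')

@[simp] theorem reverse_e (i : Fin 4) : reverse (e i) = e i := reverse_ι _

theorem ι_Q4_eq_sum (m : Fin 4 → ℝ) : ι Q4 m = ∑ i, m i • e i := by
  simp_rw [e, ← map_smul, ← map_sum, ← Pi.single_smul', smul_eq_mul, mul_one,
    Finset.univ_sum_single]

noncomputable def pseudoscalar : CliffordAlgebra Q4 := e 0 * (e 1 * (e 2 * e 3))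

noncomputable def evenSpan : Submodule ℝ (CliffordAlgebra Q4) :=
  Submodule.span ℝ
    {1, e 0 * e 1, e 0 * e 2, e 0 * e 3, e 1 * e 2, e 1 * e 3, e 2 * e 3, pseudoscalar}

theorem e_mul_e_mul_mem_evenSpan {x : CliffordAlgebra Q4} (hx : x ∈ evenSpan) (i j : Fin 4) :
    e i * (e j * x) ∈ evenSpan := by
  induction hx using Submodule.span_induction with
  | mem y hy =>
    have hbasis : {1, e 0 * e 1, e 0 * e 2, e 0 * e 3, e 1 * e 2, e 1 * e 3, e 2 * e 3,
        pseudoscalar} ⊆ (evenSpan : Set (CliffordAlgebra Q4)) := Submodule.subset_span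
    simp only [Set.insert_subset_iff, Set.singleton_subset_iff, SetLike.mem_coe,
      pseudoscalar] at hbasis
    obtain ⟨_, _, _, _, _, _, _, _⟩ := hbasis
    simp only [pseudoscalar, Set.mem_insert_iff, Set.mem_singleton_iff] at hy
    rcases hy with rfl | rfl | rfl | rfl | rfl | rfl | rfl | rfl <;>
    fin_cases i <;> fin_cases j <;>
      simp only [Fin.reduceFinMk, Fin.isValue, mul_one, mul_neg, neg_neg,
        e_mul_self, e_mul_e_mul_self, e_mul_e_of_lt, e_mul_e_mul_of_lt, Fin.reduceLT,
        Submodule.neg_mem_iff] <;>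
      assumption
  | zero => simp
  | add a b _ _ ha hb => rw [mul_add, mul_add]; exact add_mem ha hb
  | smul r a _ ha => rw [mul_smul_comm, mul_smul_comm]; exact Submodule.smul_mem _ _ ha

theorem mem_evenSpan_of_mem_even {x : CliffordAlgebra Q4} (hx : x ∈ evenOdd Q4 0) :
    x ∈ evenSpan := by
  induction x, hx using even_induction with
  | algebraMap r =>
    rw [Algebra.algebraMap_eq_smul_one]
    exact Submodule.smul_mem _ _ (Submodule.subset_span (by simp))
  | add x y _ _ hx hy => exact add_mem hx hy
  | ι_mul_ι_mul m₁ m₂ x _ hx =>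
    simp only [ι_Q4_eq_sum, Finset.sum_mul, Finset.mul_sum, smul_mul_assoc, mul_smul_comm,
      Finset.smul_sum, mul_assoc]
    exact sum_mem fun _ _ ↦ sum_mem fun _ _ ↦
      Submodule.smul_mem _ _ (Submodule.smul_mem _ _ (e_mul_e_mul_mem_evenSpan hx _ _))

theorem pseudoscalar_mul_e (i : Fin 4) : pseudoscalar * e i = -(e i * pseudoscalar) := by
  fin_cases i <;>
    simp only [pseudoscalar, Fin.reduceFinMk, Fin.isValue, mul_one, mul_assoc, mul_neg, neg_neg,
      e_mul_self, e_mul_e_mul_self, e_mul_e_of_lt, e_mul_e_mul_of_lt, Fin.reduceLT]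

theorem pseudoscalar_mul_ι (m : Fin 4 → ℝ) : pseudoscalar * ι Q4 m = -(ι Q4 m * pseudoscalar) := by
  simp only [ι_Q4_eq_sum, Finset.mul_sum, Finset.sum_mul, mul_smul_comm, smul_mul_assoc,
    pseudoscalar_mul_e, smul_neg, Finset.sum_neg_distrib]

theorem commute_pseudoscalar_of_mem_even {x : CliffordAlgebra Q4} (hx : x ∈ evenOdd Q4 0) :
    Commute pseudoscalar x := by
  induction x, hx using even_induction with
  | algebraMap r => exact Algebra.commute_algebraMap_right r _
  | add x y _ _ hx hy => exact hx.add_right hy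
  | ι_mul_ι_mul m₁ m₂ x _ hx =>
    refine Commute.mul_right ?_ hx
    rw [Commute, SemiconjBy, ← mul_assoc, pseudoscalar_mul_ι, neg_mul, mul_assoc,
      pseudoscalar_mul_ι, mul_neg, neg_neg, mul_assoc]

theorem add_reverse_mem_span_one_pseudoscalar {x : CliffordAlgebra Q4} (hx : x ∈ evenSpan) :
    x + reverse x ∈ Submodule.span ℝ {1, pseudoscalar} := by
  induction hx using Submodule.span_induction with
  | mem y hy =>
    have h1 : (1 : CliffordAlgebra Q4) ∈ Submodule.span ℝ {1, pseudoscalar} :=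
      Submodule.subset_span (by simp)
    have hω : pseudoscalar ∈ Submodule.span ℝ {1, pseudoscalar} :=
      Submodule.subset_span (by simp)
    simp only [Set.mem_insert_iff, Set.mem_singleton_iff] at hy
    rcases hy with rfl | rfl | rfl | rfl | rfl | rfl | rfl | rfl
    all_goals
      simp only [pseudoscalar, reverse.map_mul, reverse_e, reverse.map_one, mul_assoc, mul_neg,
        neg_mul, neg_neg, e_mul_e_of_lt, e_mul_e_mul_of_lt, Fin.reduceLT, add_neg_cancel] at hω ⊢
      first
        | exact zero_mem _
        | exact add_mem ‹_› ‹_›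
  | zero => simp
  | add a b _ _ ha hb => rw [map_add, add_add_add_comm]; exact add_mem ha hb
  | smul r a _ ha => rw [map_smul, ← smul_add]; exact Submodule.smul_mem _ _ ha

theorem commute_of_mem_span_one_pseudoscalar {c : CliffordAlgebra Q4}
    (hc : c ∈ Submodule.span ℝ {1, pseudoscalar}) {x : CliffordAlgebra Q4}
    (hx : x ∈ evenOdd Q4 0) : Commute c x := by
  induction hc using Submodule.span_induction with
  | mem y hy =>
    rcases hy with rfl | rfl
    · exact Commute.one_left x
    · exact commute_pseudoscalar_of_mem_even hx
  | zero => exact Commute.zero_left x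
  | add a b _ _ ha hb => exact ha.add_left hb
  | smul r a _ ha => exact ha.smul_left r

theorem commute_of_reverse_eq_self {z : CliffordAlgebra Q4} (hz : z ∈ evenOdd Q4 0)
    (hz' : reverse z = z) {x : CliffordAlgebra Q4} (hx : x ∈ evenOdd Q4 0) : Commute z x := by
  have h := add_reverse_mem_span_one_pseudoscalar (mem_evenSpan_of_mem_even hz)
  rw [hz', ← two_smul ℝ] at h
  simpa using commute_of_mem_span_one_pseudoscalar h hx |>.smul_left (2⁻¹ : ℝ)

/-- The orthogonality condition defining the normed sedenion-like algebra is preserved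
by the split-bioctonion product: if `S_r·S_d† + S_d·S_r† = 0` and
`T_r·T_d† + T_d·T_r† = 0`, then the components `U_r = S_rT_r + S_dT_d`,
`U_d = S_rT_d + S_dT_r` of the product satisfy `U_r·U_d† + U_d·U_r† = 0`. -/
theorem orthogonality_closed_under_mul
    (Sr Sd Tr Td : CliffordAlgebra Q4)
    (hSr : Sr ∈ CliffordAlgebra.evenOdd Q4 0) (hSd : Sd ∈ CliffordAlgebra.evenOdd Q4 0)
    (hTr : Tr ∈ CliffordAlgebra.evenOdd Q4 0) (hTd : Td ∈ CliffordAlgebra.evenOdd Q4 0)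
    (hS : Sr * reverse Sd + Sd * reverse Sr = 0)
    (hT : Tr * reverse Td + Td * reverse Tr = 0) :
    (Sr * Tr + Sd * Td) * reverse (Sr * Td + Sd * Tr) +
      (Sr * Td + Sd * Tr) * reverse (Sr * Tr + Sd * Td) = 0 := by
  have hA : ∀ {x}, x ∈ evenOdd Q4 0 → Commute (Tr * reverse Tr + Td * reverse Td) x :=
    commute_of_reverse_eq_self
      (add_mem (mul_reverse_mem_evenOdd_zero hTr) (mul_reverse_mem_evenOdd_zero hTd)) (by simp)
  exact orthogonality_closed_under_mul_of_commute Sr Sd Tr Td hS hT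
    (hA ((reverse_mem_evenOdd_iff Q4).mpr hSr)) (hA ((reverse_mem_evenOdd_iff Q4).mpr hSd))
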